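/- arXiv:1505.05544 — 2 statements merged into one kernel-verified Lean document; each statement's English description precedes it below -/
import Mathlib

section
/- Let Q ≥ 2 be an integer and let χ, μ, ω, σ ∈ ℝ satisfy 0 ≤ χ ≤ 1, ω ≤ 1−χ, σ > 0, and σ(1−χ−ω) ≥ 2−χ−μ. Define u : ℝ^Q → ℝ by u(x) = (1+|x|²)^{σ/2}. Then there exists a constant C > 0 such that for every x ∈ ℝ^Q, div(∇u/√(1+|∇u|²))(x) ≥ C (1+|x|)^{−μ} u(x)^{ω} |∇u(x)|^{χ} / √(1+|∇u(x)|²). In particular: if μ < 2−χ and ω < 1−χ one may take any σ ≥ (2−χ−μ)/(1−χ−ω), and if μ ≥ 2−χ and ω = 1−χ one may take any σ > 0; in both cases u is an unbounded global solution, showing the sharpness of the assumption ω > 1−χ (respectively μ < 2−χ) in the paper's a-priori estimate for the mean curvature operator. -/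
/-!
Both `∇u` and the flux `∇u/√(1+|∇u|²)` are radial fields `φ(|x|²) x`, and the divergence of such
a field is `Q φ(t) + 2 t φ'(t)` at `t = |x|²`. For the flux, `φ = a/√(1 + a² t)` with
`a(t) = σ(1+t)^(σ/2-1)`; since `a'/a = (σ/2-1)/(1+t)`, the divergence is
`φ · ((Q-1) + (1+(σ-1)t)/((1+t)(1+a²t)))`, hence at least `min 1 σ · φ` when `Q ≥ 2`.
Comparing `1+|x|` with `√(1+|x|²)`, the left-hand side is at most a constant times
`φ · (1+|x|²)^e`, and `e ≤ 0` is exactly the condition `σ(1-χ-ω) ≥ 2-χ-μ`.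
-/

open Set Filter Classical

noncomputable section

/-- The divergence of a vector field `V` on `ℝ^Q`: the sum of the partial derivatives
`∂ᵢ Vᵢ`. -/
def divg {Q : ℕ} (V : EuclideanSpace ℝ (Fin Q) → EuclideanSpace ℝ (Fin Q))
    (x : EuclideanSpace ℝ (Fin Q)) : ℝ :=
  ∑ i, fderiv ℝ V x (EuclideanSpace.single i 1) i

open Real

def gradFactor (σ t : ℝ) : ℝ := σ * (1 + t) ^ (σ / 2 - 1)

def fluxFactor (σ t : ℝ) : ℝ := gradFactor σ t / √(1 + gradFactor σ t ^ 2 * t)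

theorem gradFactor_nonneg {σ t : ℝ} (hσ : 0 ≤ σ) (ht : 0 ≤ t) : 0 ≤ gradFactor σ t := by
  unfold gradFactor; positivity

section InnerProductSpace

variable {F : Type*} [NormedAddCommGroup F] [InnerProductSpace ℝ F] [CompleteSpace F]

theorem hasGradientAt_one_add_norm_sq_rpow (σ : ℝ) (x : F) :
    HasGradientAt (fun y : F => (1 + ‖y‖ ^ 2) ^ (σ / 2)) (gradFactor σ (‖x‖ ^ 2) • x) x := by
  have hbase : HasFDerivAt (fun y : F => 1 + ‖y‖ ^ 2) (2 • innerSL ℝ x) x :=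
    (hasStrictFDerivAt_norm_sq x).hasFDerivAt.const_add 1
  have hpow := (hasDerivAt_rpow_const (p := σ / 2)
    (Or.inl (by positivity : (1 + ‖x‖ ^ 2 : ℝ) ≠ 0))).comp_hasFDerivAt x hbase
  rw [hasGradientAt_iff_hasFDerivAt]
  refine hpow.congr_fderiv (ContinuousLinearMap.ext fun y => ?_)
  simp only [gradFactor, InnerProductSpace.toDual_apply_apply, smul_apply,
    innerSL_apply_apply, real_inner_smul_left, smul_eq_mul]
  ring

theorem gradient_one_add_norm_sq_rpow (σ : ℝ) (x : F) :
    gradient (fun y : F => (1 + ‖y‖ ^ 2) ^ (σ / 2)) x = gradFactor σ (‖x‖ ^ 2) • x :=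
  (hasGradientAt_one_add_norm_sq_rpow σ x).gradient

theorem inv_sqrt_one_add_norm_sq_smul_gradient (σ : ℝ) (x : F) :
    (√(1 + ‖gradient (fun y : F => (1 + ‖y‖ ^ 2) ^ (σ / 2)) x‖ ^ 2))⁻¹ •
        gradient (fun y : F => (1 + ‖y‖ ^ 2) ^ (σ / 2)) x =
      fluxFactor σ (‖x‖ ^ 2) • x := by
  rw [gradient_one_add_norm_sq_rpow, norm_smul, mul_pow, Real.norm_eq_abs, sq_abs, smul_smul,
    fluxFactor, div_eq_inv_mul]

end InnerProductSpace

theorem divg_comp_norm_sq_smul_self {Q : ℕ} {φ : ℝ → ℝ} {x : EuclideanSpace ℝ (Fin Q)}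
    (hφ : DifferentiableAt ℝ φ (‖x‖ ^ 2)) :
    divg (fun y => φ (‖y‖ ^ 2) • y) x = Q * φ (‖x‖ ^ 2) + 2 * deriv φ (‖x‖ ^ 2) * ‖x‖ ^ 2 := by
  have hfield : HasFDerivAt (fun y : EuclideanSpace ℝ (Fin Q) => φ (‖y‖ ^ 2) • y)
      (φ (‖x‖ ^ 2) • ContinuousLinearMap.id ℝ _ +
        (deriv φ (‖x‖ ^ 2) • 2 • innerSL ℝ x).smulRight x) x :=
    (hφ.hasDerivAt.comp_hasFDerivAt x (hasStrictFDerivAt_norm_sq x).hasFDerivAt).smul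
      (hasFDerivAt_id x)
  have hentry : ∀ i, fderiv ℝ (fun y => φ (‖y‖ ^ 2) • y) x (EuclideanSpace.single i 1) i =
      φ (‖x‖ ^ 2) + 2 * deriv φ (‖x‖ ^ 2) * x i ^ 2 := by
    intro i
    simp only [hfield.fderiv, add_apply, smul_apply, ContinuousLinearMap.id_apply,
      ContinuousLinearMap.smulRight_apply, coe_innerSL_apply, EuclideanSpace.inner_single_right,
      ringHom_apply, one_mul, nsmul_eq_mul, Nat.cast_ofNat, smul_eq_mul, PiLp.add_apply,
      PiLp.smul_apply, PiLp.single_eq_same, mul_one, add_right_inj]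
    ring
  simp only [divg, hentry, Finset.sum_add_distrib, ← Finset.mul_sum,
    ← EuclideanSpace.real_norm_sq_eq, Finset.sum_const, Finset.card_univ, Fintype.card_fin,
    nsmul_eq_mul]

theorem hasDerivAt_gradFactor (σ : ℝ) {t : ℝ} (ht : -1 < t) :
    HasDerivAt (gradFactor σ) ((σ / 2 - 1) * gradFactor σ t / (1 + t)) t := by
  have hpos : 0 < 1 + t := by linarith
  have h := (((hasDerivAt_id t).const_add 1).rpow_const (p := σ / 2 - 1)
    (Or.inl hpos.ne')).const_mul σ
  refine h.congr_deriv ?_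
  simp only [gradFactor, id, rpow_sub_one hpos.ne' (σ / 2 - 1)]
  ring

theorem hasDerivAt_fluxFactor (σ : ℝ) {t : ℝ} (ht : 0 ≤ t) :
    HasDerivAt (fluxFactor σ) (fluxFactor σ t * ((σ / 2 - 1) / (1 + t) -
      gradFactor σ t ^ 2 * (1 + (σ - 1) * t) /
        (2 * (1 + t) * (1 + gradFactor σ t ^ 2 * t)))) t := by
  have ha := hasDerivAt_gradFactor σ (by linarith : -1 < t)
  have hX : 0 < 1 + gradFactor σ t ^ 2 * t := by positivity
  have h := ha.div (((ha.pow 2).mul (hasDerivAt_id t)).const_add 1 |>.sqrt hX.ne')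
    (sqrt_pos.2 hX).ne'
  refine h.congr_deriv ?_
  simp only [fluxFactor, id, Pi.pow_apply, Pi.mul_apply]
  field_simp
  rw [sq_sqrt hX.le]
  ring

theorem min_one_mul_fluxFactor_le {Q σ t : ℝ} (hQ : 2 ≤ Q) (hσ : 0 < σ) (ht : 0 ≤ t) :
    min 1 σ * fluxFactor σ t ≤ Q * fluxFactor σ t + 2 * deriv (fluxFactor σ) t * t := by
  rw [(hasDerivAt_fluxFactor σ ht).deriv]
  set a := gradFactor σ t
  set p := a ^ 2 * t
  have hp : 0 ≤ p := by positivity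
  have hflux : 0 ≤ fluxFactor σ t := div_nonneg (gradFactor_nonneg hσ.le ht) (sqrt_nonneg _)
  have hmin1 : min 1 σ ≤ 1 := min_le_left _ _
  have hminσ : min 1 σ ≤ σ := min_le_right _ _
  have hbracket : min 1 σ ≤ (Q - 1) + (1 + (σ - 1) * t) / ((1 + t) * (1 + p)) := by
    rw [← sub_le_iff_le_add', le_div_iff₀ (by positivity)]
    nlinarith [mul_nonneg hp ht, mul_le_mul_of_nonneg_right hmin1 (mul_nonneg hp ht),
      mul_le_mul_of_nonneg_right hmin1 hp, mul_le_mul_of_nonneg_right hminσ ht]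
  calc min 1 σ * fluxFactor σ t
      ≤ ((Q - 1) + (1 + (σ - 1) * t) / ((1 + t) * (1 + p))) * fluxFactor σ t :=
        mul_le_mul_of_nonneg_right hbracket hflux
    _ = _ := by field_simp; ring

theorem one_add_rpow_neg_le (μ : ℝ) {s : ℝ} (hs : 0 ≤ s) :
    (1 + s) ^ (-μ) ≤ 2 ^ (|μ| / 2) * (1 + s ^ 2) ^ (-μ / 2) := by
  have hsq : (1 + s) ^ (-μ) = ((1 + s) ^ 2) ^ (-μ / 2) := by
    rw [← rpow_natCast, ← rpow_mul (by positivity)]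
    ring_nf
  rw [hsq]
  rcases le_or_gt 0 μ with hμ | hμ
  · calc ((1 + s) ^ 2) ^ (-μ / 2) ≤ (1 + s ^ 2) ^ (-μ / 2) :=
          rpow_le_rpow_of_nonpos (by positivity) (by nlinarith) (by linarith)
      _ ≤ 2 ^ (|μ| / 2) * (1 + s ^ 2) ^ (-μ / 2) :=
          le_mul_of_one_le_left (by positivity) (one_le_rpow (by norm_num) (by positivity))
  · calc ((1 + s) ^ 2) ^ (-μ / 2) ≤ (2 * (1 + s ^ 2)) ^ (-μ / 2) :=
          rpow_le_rpow (by positivity) (by nlinarith [sq_nonneg (1 - s)]) (by linarith)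
      _ = 2 ^ (|μ| / 2) * (1 + s ^ 2) ^ (-μ / 2) := by
          rw [mul_rpow (by norm_num) (by positivity), abs_of_neg hμ, neg_div]

theorem rpow_le_one_add_sq_rpow_half {χ s : ℝ} (hχ : 0 ≤ χ) (hs : 0 ≤ s) :
    s ^ χ ≤ (1 + s ^ 2) ^ (χ / 2) := by
  calc s ^ χ = (s ^ 2) ^ (χ / 2) := by
        rw [← rpow_natCast, ← rpow_mul hs]
        ring_nf
    _ ≤ (1 + s ^ 2) ^ (χ / 2) := rpow_le_rpow (by positivity) (by linarith) (by linarith)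

theorem weight_le_gradFactor {χ μ ω σ s : ℝ} (hχ : 0 ≤ χ) (hσ : 0 < σ)
    (hσω : 2 - χ - μ ≤ σ * (1 - χ - ω)) (hs : 0 ≤ s) :
    (1 + s) ^ (-μ) * ((1 + s ^ 2) ^ (σ / 2)) ^ ω * (gradFactor σ (s ^ 2) * s) ^ χ ≤
      2 ^ (|μ| / 2) * σ ^ χ * (1 + s ^ 2) ^ (σ / 2 - 1) := by
  set w := 1 + s ^ 2
  have hw : 0 < w := by positivity
  have hw1 : 1 ≤ w := le_add_of_nonneg_right (sq_nonneg s)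
  have hexp : -μ / 2 + σ / 2 * ω + (σ / 2 - 1) * χ + χ / 2 ≤ σ / 2 - 1 := by nlinarith
  calc (1 + s) ^ (-μ) * (w ^ (σ / 2)) ^ ω * (gradFactor σ (s ^ 2) * s) ^ χ
      ≤ (2 ^ (|μ| / 2) * w ^ (-μ / 2)) * w ^ (σ / 2 * ω) *
          (σ ^ χ * w ^ ((σ / 2 - 1) * χ) * w ^ (χ / 2)) := by
        rw [← rpow_mul hw.le, mul_rpow (gradFactor_nonneg hσ.le (sq_nonneg s)) hs, gradFactor,
          mul_rpow hσ.le (by positivity), ← rpow_mul hw.le]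
        gcongr
        · exact one_add_rpow_neg_le μ hs
        · exact rpow_le_one_add_sq_rpow_half hχ hs
    _ = 2 ^ (|μ| / 2) * σ ^ χ * w ^ (-μ / 2 + σ / 2 * ω + (σ / 2 - 1) * χ + χ / 2) := by
        rw [rpow_add hw, rpow_add hw, rpow_add hw]
        ring
    _ ≤ 2 ^ (|μ| / 2) * σ ^ χ * w ^ (σ / 2 - 1) := by
        gcongr

theorem statement15_general (Q : ℕ) (hQ : 2 ≤ Q) (χ μ ω σ : ℝ)
    (hχ0 : 0 ≤ χ) (hσ : 0 < σ)
    (hσω : 2 - χ - μ ≤ σ * (1 - χ - ω)) :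
    ∃ C : ℝ, 0 < C ∧ ∀ x : EuclideanSpace ℝ (Fin Q),
      C * (1 + ‖x‖) ^ (-μ) * ((1 + ‖x‖ ^ 2) ^ (σ / 2)) ^ ω *
        ‖gradient (fun y : EuclideanSpace ℝ (Fin Q) => (1 + ‖y‖ ^ 2) ^ (σ / 2)) x‖ ^ χ /
        Real.sqrt (1 + ‖gradient
          (fun y : EuclideanSpace ℝ (Fin Q) => (1 + ‖y‖ ^ 2) ^ (σ / 2)) x‖ ^ 2)
      ≤ divg (fun y : EuclideanSpace ℝ (Fin Q) =>
          (Real.sqrt (1 + ‖gradient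
            (fun z : EuclideanSpace ℝ (Fin Q) => (1 + ‖z‖ ^ 2) ^ (σ / 2)) y‖ ^ 2))⁻¹
          • gradient (fun z : EuclideanSpace ℝ (Fin Q) => (1 + ‖z‖ ^ 2) ^ (σ / 2)) y) x := by
  refine ⟨min 1 σ * σ / (2 ^ (|μ| / 2) * σ ^ χ), by positivity, fun x => ?_⟩
  have ha := gradFactor_nonneg hσ.le (sq_nonneg ‖x‖)
  rw [funext (inv_sqrt_one_add_norm_sq_smul_gradient σ),
    divg_comp_norm_sq_smul_self (hasDerivAt_fluxFactor σ (sq_nonneg ‖x‖)).differentiableAt,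
    gradient_one_add_norm_sq_rpow, norm_smul, norm_of_nonneg ha, mul_pow]
  calc _ = min 1 σ * σ / (2 ^ (|μ| / 2) * σ ^ χ) *
        ((1 + ‖x‖) ^ (-μ) * ((1 + ‖x‖ ^ 2) ^ (σ / 2)) ^ ω * (gradFactor σ (‖x‖ ^ 2) * ‖x‖) ^ χ)
          / √(1 + gradFactor σ (‖x‖ ^ 2) ^ 2 * ‖x‖ ^ 2) := by ring
    _ ≤ min 1 σ * σ / (2 ^ (|μ| / 2) * σ ^ χ) *
          (2 ^ (|μ| / 2) * σ ^ χ * (1 + ‖x‖ ^ 2) ^ (σ / 2 - 1))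
          / √(1 + gradFactor σ (‖x‖ ^ 2) ^ 2 * ‖x‖ ^ 2) := by
        gcongr _ * ?_ / _
        exact weight_le_gradFactor hχ0 hσ hσω (norm_nonneg x)
    _ = min 1 σ * fluxFactor σ (‖x‖ ^ 2) := by
        rw [fluxFactor, gradFactor]
        field_simp
    _ ≤ _ := min_one_mul_fluxFactor_le (mod_cast hQ) hσ (sq_nonneg ‖x‖)

/-- Sharpness of the Keller–Osserman exponent for the mean curvature operator:
for `0 ≤ χ ≤ 1`, `ω ≤ 1−χ`, `σ > 0` with `σ(1−χ−ω) ≥ 2−χ−μ`, the unbounded function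
`u(x) = (1+|x|²)^{σ/2}` on `ℝ^Q`, `Q ≥ 2`, satisfies
`div(∇u/√(1+|∇u|²)) ≥ C(1+|x|)^{−μ} u^ω |∇u|^χ/√(1+|∇u|²)` for some `C > 0`. -/
theorem statement15 (Q : ℕ) (hQ : 2 ≤ Q) (χ μ ω σ : ℝ)
    (hχ0 : 0 ≤ χ) (hχ1 : χ ≤ 1) (hω : ω ≤ 1 - χ) (hσ : 0 < σ)
    (hσω : 2 - χ - μ ≤ σ * (1 - χ - ω)) :
    ∃ C : ℝ, 0 < C ∧ ∀ x : EuclideanSpace ℝ (Fin Q),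
      C * (1 + ‖x‖) ^ (-μ) * ((1 + ‖x‖ ^ 2) ^ (σ / 2)) ^ ω *
        ‖gradient (fun y : EuclideanSpace ℝ (Fin Q) => (1 + ‖y‖ ^ 2) ^ (σ / 2)) x‖ ^ χ /
        Real.sqrt (1 + ‖gradient
          (fun y : EuclideanSpace ℝ (Fin Q) => (1 + ‖y‖ ^ 2) ^ (σ / 2)) x‖ ^ 2)
      ≤ divg (fun y : EuclideanSpace ℝ (Fin Q) =>
          (Real.sqrt (1 + ‖gradient
            (fun z : EuclideanSpace ℝ (Fin Q) => (1 + ‖z‖ ^ 2) ^ (σ / 2)) y‖ ^ 2))⁻¹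
          • gradient (fun z : EuclideanSpace ℝ (Fin Q) => (1 + ‖z‖ ^ 2) ^ (σ / 2)) y) x :=
  statement15_general Q hQ χ μ ω σ hχ0 hσ hσω
end
end

section
/- Let Q ≥ 2 be an integer, let χ, μ ∈ ℝ satisfy 0 ≤ χ < 1 and μ < 2−χ, set ω = 1−χ and σ = (2−χ−μ)/(1−χ) > 0, and define u : ℝ^Q → ℝ by u(x) = exp((1+|x|²)^{σ/2}). Then there exist constants C > 0 and R₀ > 0 such that for every x ∈ ℝ^Q with |x| ≥ R₀, div(∇u/√(1+|∇u|²))(x) ≥ C (1+|x|)^{−μ} u(x)^{ω} |∇u(x)|^{χ} / √(1+|∇u(x)|²). In particular, u is an unbounded solution of the coercive inequality with borderline exponent ω = 1−χ on a superlevel set {u > γ} for γ large, showing that the strict inequality ω > 1−χ in the paper's Keller–Osserman type assumption is sharp. -/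
/-!
Write `u(x) = g(|x|²)`. Then `∇u(x) = h(|x|²) x` with `h = 2g'`, the mean curvature field is
`φ(|x|²) x` with `φ = h / √(1 + t h²)`, and the divergence `Qφ + 2tφ'` of such a radial field
equals `(Q-1) h / S + (h + 2t h') / S³`, where `S = √(1 + |∇u|²)`. For
`u = exp((1+|x|²)^{σ/2})` the profile `h` is eventually increasing, so the divergence is at least
`(Q-1) h / S`. The choice of `σ` makes `h^{1-χ} = σ^{1-χ} (1+|x|²)^{(χ-μ)/2} u^{1-χ}`, and
`(1+|x|)^{-μ} |x|^χ ≤ 2^{|χ-μ|/2} (1+|x|²)^{(χ-μ)/2}`, which bounds the right-hand side by a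
multiple of `(Q-1) h / S`.
-/

open Set Filter Classical

noncomputable section

theorem rpow_one_add_sq_le {r : ℝ} (hr : 0 ≤ r) (e : ℝ) :
    ((1 + r) ^ 2) ^ e ≤ 2 ^ |e| * (1 + r ^ 2) ^ e := by
  have hpos : 0 < 1 + r ^ 2 := by positivity
  rcases le_total 0 e with he | he
  · calc ((1 + r) ^ 2) ^ e ≤ (2 * (1 + r ^ 2)) ^ e :=
          Real.rpow_le_rpow (by positivity) (by nlinarith [sq_nonneg (1 - r)]) he
      _ = 2 ^ |e| * (1 + r ^ 2) ^ e := by rw [abs_of_nonneg he, Real.mul_rpow two_pos.le hpos.le]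
  · calc ((1 + r) ^ 2) ^ e ≤ (1 + r ^ 2) ^ e :=
          Real.rpow_le_rpow_of_nonpos hpos (by nlinarith) he
      _ ≤ 2 ^ |e| * (1 + r ^ 2) ^ e :=
          le_mul_of_one_le_left (by positivity) (Real.one_le_rpow one_le_two (abs_nonneg e))

theorem one_add_rpow_neg_mul_rpow_le {r χ : ℝ} (hr : 0 ≤ r) (hχ : 0 ≤ χ) (μ : ℝ) :
    (1 + r) ^ (-μ) * r ^ χ ≤ 2 ^ |(χ - μ) / 2| * (1 + r ^ 2) ^ ((χ - μ) / 2) := by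
  have h1r : 0 < 1 + r := by linarith
  calc (1 + r) ^ (-μ) * r ^ χ ≤ (1 + r) ^ (-μ) * (1 + r) ^ χ := by
        gcongr; linarith
    _ = ((1 + r) ^ 2) ^ ((χ - μ) / 2) := by
        rw [← Real.rpow_add h1r, ← Real.rpow_natCast_mul h1r.le]; ring_nf
    _ ≤ _ := rpow_one_add_sq_le hr _

theorem hasDerivAt_div_sqrt_one_add_mul_sq {h : ℝ → ℝ} {h' t : ℝ} (hh : HasDerivAt h h' t)
    (ht : 0 ≤ t) :
    HasDerivAt (fun s => h s / √(1 + s * h s ^ 2))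
      ((2 * h' - h t ^ 3) / (2 * √(1 + t * h t ^ 2) ^ 3)) t := by
  have hpos : 0 < 1 + t * h t ^ 2 := by positivity
  have hS : √(1 + t * h t ^ 2) ^ 2 = 1 + t * h t ^ 2 := Real.sq_sqrt hpos.le
  have hS0 : 0 < √(1 + t * h t ^ 2) := Real.sqrt_pos.2 hpos
  have hin : HasDerivAt (fun s => 1 + s * h s ^ 2) (1 * h t ^ 2 + t * (2 * h t ^ 1 * h')) t := by
    simpa using ((hasDerivAt_id t).mul (hh.pow 2)).const_add 1
  refine (hh.div (hin.sqrt hpos.ne') hS0.ne').congr_deriv ?_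
  field_simp
  linear_combination (2 * h') * hS

def expRadialSlope (σ t : ℝ) : ℝ := σ * (1 + t) ^ (σ / 2 - 1) * Real.exp ((1 + t) ^ (σ / 2))

theorem expRadialSlope_pos {σ t : ℝ} (hσ : 0 < σ) (ht : 0 ≤ t) : 0 < expRadialSlope σ t := by
  have : 0 < 1 + t := by linarith
  unfold expRadialSlope; positivity

theorem hasDerivAt_exp_one_add_rpow (σ : ℝ) {t : ℝ} (ht : 0 ≤ t) :
    HasDerivAt (fun s => Real.exp ((1 + s) ^ (σ / 2))) (2⁻¹ * expRadialSlope σ t) t := by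
  have h1 : HasDerivAt (fun s : ℝ => 1 + s) 1 t := (hasDerivAt_id t).const_add 1
  refine ((h1.rpow_const (Or.inl (by positivity))).exp).congr_deriv ?_
  unfold expRadialSlope; ring

theorem eventually_hasDerivAt_expRadialSlope_nonneg {σ : ℝ} (hσ : 0 < σ) :
    ∀ᶠ t in atTop, ∃ h', HasDerivAt (expRadialSlope σ) h' t ∧ 0 ≤ h' := by
  have hgrow : Tendsto (fun t : ℝ => σ / 2 - 1 + σ / 2 * (1 + t) ^ (σ / 2)) atTop atTop :=
    tendsto_atTop_add_const_left _ _ <| Tendsto.const_mul_atTop (by positivity) <|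
      (tendsto_rpow_atTop (by positivity)).comp (tendsto_atTop_add_const_left _ 1 tendsto_id)
  filter_upwards [hgrow.eventually_ge_atTop 0, eventually_ge_atTop 0] with t hfac ht
  have h1t : 0 < 1 + t := by linarith
  have h1 : HasDerivAt (fun s : ℝ => 1 + s) 1 t := (hasDerivAt_id t).const_add 1
  refine ⟨_, ((h1.rpow_const (Or.inl h1t.ne')).const_mul σ).mul
    (h1.rpow_const (Or.inl h1t.ne')).exp, ?_⟩
  set E := Real.exp ((1 + t) ^ (σ / 2))
  have hE : 0 < E := Real.exp_pos _
  set a := (1 + t) ^ (σ / 2 - 2)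
  have ha : 0 < a := by positivity
  have ha1 : (1 + t) ^ (σ / 2 - 1) = a * (1 + t) := by
    rw [show σ / 2 - 1 = σ / 2 - 2 + 1 by ring, Real.rpow_add_one h1t.ne']
  have ha2 : (1 + t) ^ (σ / 2) = a * (1 + t) ^ 2 := by
    rw [show σ / 2 = σ / 2 - 2 + 2 by ring, Real.rpow_add h1t, Real.rpow_two]
  rw [ha2] at hfac
  rw [show σ / 2 - 1 - 1 = σ / 2 - 2 by ring, ha1]
  calc (0 : ℝ) ≤ σ * a * E * (σ / 2 - 1 + σ / 2 * (a * (1 + t) ^ 2)) := by positivity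
    _ = _ := by ring

theorem rpow_mul_expRadialSlope_le {σ χ μ r : ℝ} (hσ : 0 < σ) (hχ : 0 ≤ χ)
    (hσχ : σ * (1 - χ) = 2 - χ - μ) (hr : 0 ≤ r) :
    σ ^ (1 - χ) * (1 + r) ^ (-μ) * Real.exp ((1 + r ^ 2) ^ (σ / 2)) ^ (1 - χ) *
        (expRadialSlope σ (r ^ 2) * r) ^ χ
      ≤ 2 ^ |(χ - μ) / 2| * expRadialSlope σ (r ^ 2) := by
  set h := expRadialSlope σ (r ^ 2)
  set E := Real.exp ((1 + r ^ 2) ^ (σ / 2))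
  have hh : 0 < h := expRadialSlope_pos hσ (sq_nonneg r)
  have h1r : 0 < 1 + r ^ 2 := by positivity
  have hsplit : h ^ (1 - χ) * h ^ χ = h := by
    rw [← Real.rpow_add hh, sub_add_cancel, Real.rpow_one]
  have hpow : h ^ (1 - χ) = σ ^ (1 - χ) * (1 + r ^ 2) ^ ((χ - μ) / 2) * E ^ (1 - χ) := by
    rw [show h = σ * (1 + r ^ 2) ^ (σ / 2 - 1) * E from rfl,
      Real.mul_rpow (by positivity) (Real.exp_pos _).le, Real.mul_rpow hσ.le (by positivity),
      ← Real.rpow_mul h1r.le]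
    congr 3
    linear_combination hσχ / 2
  calc σ ^ (1 - χ) * (1 + r) ^ (-μ) * E ^ (1 - χ) * (h * r) ^ χ
      = σ ^ (1 - χ) * E ^ (1 - χ) * h ^ χ * ((1 + r) ^ (-μ) * r ^ χ) := by
        rw [Real.mul_rpow hh.le hr]; ring
    _ ≤ σ ^ (1 - χ) * E ^ (1 - χ) * h ^ χ *
          (2 ^ |(χ - μ) / 2| * (1 + r ^ 2) ^ ((χ - μ) / 2)) := by
        gcongr ?_ * ?_
        exact one_add_rpow_neg_mul_rpow_le hr hχ μ
    _ = 2 ^ |(χ - μ) / 2| * h := by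
        conv_rhs => rw [← hsplit, hpow]
        ring

section InnerProductSpace

variable {E : Type*} [NormedAddCommGroup E] [InnerProductSpace ℝ E]

theorem hasGradientAt_comp_norm_sq [CompleteSpace E] {g : ℝ → ℝ} {g' : ℝ} {x : E}
    (hg : HasDerivAt g g' (‖x‖ ^ 2)) :
    HasGradientAt (fun y => g (‖y‖ ^ 2)) ((2 * g') • x) x := by
  rw [hasGradientAt_iff_hasFDerivAt]
  refine (hg.comp_hasFDerivAt x (hasStrictFDerivAt_norm_sq x).hasFDerivAt).congr_fderiv ?_
  ext v
  simp
  ring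

theorem hasFDerivAt_comp_norm_sq_smul {φ : ℝ → ℝ} {φ' : ℝ} {x : E}
    (hφ : HasDerivAt φ φ' (‖x‖ ^ 2)) :
    HasFDerivAt (fun y => φ (‖y‖ ^ 2) • y)
      (φ (‖x‖ ^ 2) • ContinuousLinearMap.id ℝ E + (φ' • 2 • innerSL ℝ x).smulRight x) x :=
  (hφ.comp_hasFDerivAt x (hasStrictFDerivAt_norm_sq x).hasFDerivAt).smul (hasFDerivAt_id x)

theorem gradient_exp_one_add_norm_sq_rpow [CompleteSpace E] (σ : ℝ) (x : E) :
    gradient (fun y => Real.exp ((1 + ‖y‖ ^ 2) ^ (σ / 2))) x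
      = expRadialSlope σ (‖x‖ ^ 2) • x := by
  simpa using (hasGradientAt_comp_norm_sq (hasDerivAt_exp_one_add_rpow σ (sq_nonneg ‖x‖))).gradient

end InnerProductSpace

section Euclidean

variable {Q : ℕ}

theorem divg_comp_norm_sq_smul {φ : ℝ → ℝ} {φ' : ℝ} {x : EuclideanSpace ℝ (Fin Q)}
    (hφ : HasDerivAt φ φ' (‖x‖ ^ 2)) :
    divg (fun y => φ (‖y‖ ^ 2) • y) x = Q * φ (‖x‖ ^ 2) + 2 * ‖x‖ ^ 2 * φ' := by
  have hx : ∑ i, x i * x i = ‖x‖ ^ 2 := by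
    simpa [EuclideanSpace.norm_sq_eq, sq] using (EuclideanSpace.norm_sq_eq x).symm
  simp [divg, (hasFDerivAt_comp_norm_sq_smul hφ).fderiv, EuclideanSpace.inner_single_right,
    Finset.sum_add_distrib]
  rw [← hx, Finset.mul_sum, Finset.sum_mul]
  exact Finset.sum_congr rfl fun i _ => by ring

theorem le_divg_of_gradient_eq_smul {u : EuclideanSpace ℝ (Fin Q) → ℝ} {h : ℝ → ℝ}
    {h' : ℝ} {x : EuclideanSpace ℝ (Fin Q)} (hu : ∀ y, gradient u y = h (‖y‖ ^ 2) • y)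
    (hh : HasDerivAt h h' (‖x‖ ^ 2)) (hx : 0 ≤ h (‖x‖ ^ 2) + 2 * ‖x‖ ^ 2 * h') :
    (Q - 1) * h (‖x‖ ^ 2) / √(1 + ‖gradient u x‖ ^ 2)
      ≤ divg (fun y => (√(1 + ‖gradient u y‖ ^ 2))⁻¹ • gradient u y) x := by
  have hnorm : ∀ y : EuclideanSpace ℝ (Fin Q),
      ‖gradient u y‖ ^ 2 = ‖y‖ ^ 2 * h (‖y‖ ^ 2) ^ 2 := fun y => by
    rw [hu, norm_smul, mul_pow, Real.norm_eq_abs, sq_abs, mul_comm]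
  have hfield : (fun y => (√(1 + ‖gradient u y‖ ^ 2))⁻¹ • gradient u y)
      = fun y => (h (‖y‖ ^ 2) / √(1 + ‖y‖ ^ 2 * h (‖y‖ ^ 2) ^ 2)) • y := by
    ext1 y
    rw [hnorm, hu, smul_smul, div_eq_inv_mul]
  rw [hfield, divg_comp_norm_sq_smul (hasDerivAt_div_sqrt_one_add_mul_sq hh (by positivity)),
    hnorm]
  set t := ‖x‖ ^ 2
  set S := √(1 + t * h t ^ 2)
  have hS : 0 < S := Real.sqrt_pos.2 (by positivity)
  have hS2 : S ^ 2 = 1 + t * h t ^ 2 := Real.sq_sqrt (by positivity)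
  have key : Q * (h t / S) + 2 * t * ((2 * h' - h t ^ 3) / (2 * S ^ 3))
      = (Q - 1) * h t / S + (h t + 2 * t * h') / S ^ 3 := by
    field_simp
    linear_combination h t * hS2
  rw [key]
  exact le_add_of_nonneg_right (by positivity)

end Euclidean

/-- Sharpness of the strict inequality `ω > 1−χ`: with `ω = 1−χ` and
`σ = (2−χ−μ)/(1−χ)`, the exponential function `u(x) = exp((1+|x|²)^{σ/2})` satisfies
`div(∇u/√(1+|∇u|²)) ≥ C(1+|x|)^{−μ} u^{1−χ} |∇u|^χ/√(1+|∇u|²)` for `|x|` large. -/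
theorem statement16 (Q : ℕ) (hQ : 2 ≤ Q) (χ μ : ℝ)
    (hχ0 : 0 ≤ χ) (hχ1 : χ < 1) (hμ : μ < 2 - χ) :
    ∃ C R₀ : ℝ, 0 < C ∧ 0 < R₀ ∧ ∀ x : EuclideanSpace ℝ (Fin Q), R₀ ≤ ‖x‖ →
      C * (1 + ‖x‖) ^ (-μ) *
        (Real.exp ((1 + ‖x‖ ^ 2) ^ (((2 - χ - μ) / (1 - χ)) / 2))) ^ (1 - χ) *
        ‖gradient (fun y : EuclideanSpace ℝ (Fin Q) =>
          Real.exp ((1 + ‖y‖ ^ 2) ^ (((2 - χ - μ) / (1 - χ)) / 2))) x‖ ^ χ /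
        Real.sqrt (1 + ‖gradient (fun y : EuclideanSpace ℝ (Fin Q) =>
          Real.exp ((1 + ‖y‖ ^ 2) ^ (((2 - χ - μ) / (1 - χ)) / 2))) x‖ ^ 2)
      ≤ divg (fun y : EuclideanSpace ℝ (Fin Q) =>
          (Real.sqrt (1 + ‖gradient (fun z : EuclideanSpace ℝ (Fin Q) =>
            Real.exp ((1 + ‖z‖ ^ 2) ^ (((2 - χ - μ) / (1 - χ)) / 2))) y‖ ^ 2))⁻¹
          • gradient (fun z : EuclideanSpace ℝ (Fin Q) =>
            Real.exp ((1 + ‖z‖ ^ 2) ^ (((2 - χ - μ) / (1 - χ)) / 2))) y) x := by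
  set σ := (2 - χ - μ) / (1 - χ)
  have hσ : 0 < σ := div_pos (by linarith) (by linarith)
  have hσχ : σ * (1 - χ) = 2 - χ - μ := div_mul_cancel₀ _ (by linarith)
  have hQ1 : (0 : ℝ) < Q - 1 := by
    have : (2 : ℝ) ≤ Q := by exact_mod_cast hQ
    linarith
  obtain ⟨R, hR⟩ := eventually_atTop.1 <| (tendsto_pow_atTop two_ne_zero).eventually
    (eventually_hasDerivAt_expRadialSlope_nonneg hσ)
  refine ⟨(Q - 1) * σ ^ (1 - χ) / 2 ^ |(χ - μ) / 2|, max 1 R, by positivity,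
    lt_max_of_lt_left one_pos, fun x hx => ?_⟩
  obtain ⟨h', hderiv, hh'⟩ := hR ‖x‖ (le_of_max_le_right hx)
  have hgrad := gradient_exp_one_add_norm_sq_rpow (E := EuclideanSpace ℝ (Fin Q)) σ
  have hh := expRadialSlope_pos hσ (sq_nonneg ‖x‖)
  refine le_trans ?_ (le_divg_of_gradient_eq_smul hgrad hderiv (by positivity))
  rw [hgrad, norm_smul, Real.norm_of_nonneg hh.le]
  gcongr ?_ / _
  calc (Q - 1) * σ ^ (1 - χ) / 2 ^ |(χ - μ) / 2| * (1 + ‖x‖) ^ (-μ) *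
        Real.exp ((1 + ‖x‖ ^ 2) ^ (σ / 2)) ^ (1 - χ) * (expRadialSlope σ (‖x‖ ^ 2) * ‖x‖) ^ χ
      = (Q - 1) / 2 ^ |(χ - μ) / 2| * (σ ^ (1 - χ) * (1 + ‖x‖) ^ (-μ) *
        Real.exp ((1 + ‖x‖ ^ 2) ^ (σ / 2)) ^ (1 - χ) *
          (expRadialSlope σ (‖x‖ ^ 2) * ‖x‖) ^ χ) := by ring
    _ ≤ (Q - 1) / 2 ^ |(χ - μ) / 2| * (2 ^ |(χ - μ) / 2| * expRadialSlope σ (‖x‖ ^ 2)) := by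
        gcongr ?_ * ?_
        exact rpow_mul_expRadialSlope_le hσ hχ0 hσχ (norm_nonneg x)
    _ = (Q - 1) * expRadialSlope σ (‖x‖ ^ 2) := by field_simp
end
end
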